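/- arXiv:2411.01248 — 2 statements merged into one kernel-verified Lean document; each statement's English description precedes it below -/
import Mathlib

section
/- The determinant of the Gram matrix of the Stiefel constraint gradients at any point U with U^⊤U = I_C equals 2^{C(C−1)/2}. -/
open Matrix

open Finset

/-- Euclidean gradient of `j_s(U) = (1/2)‖u_s‖²`. -/
def gradNorm {d C : ℕ} (U : Matrix (Fin d) (Fin C) ℝ) (s : Fin C) :
    Matrix (Fin d) (Fin C) ℝ :=
  fun i c => if c = s then U i s else 0

/-- Euclidean gradient of `j_{pq}(U) = ⟨u_p, u_q⟩`. -/
def gradOrtho {d C : ℕ} (U : Matrix (Fin d) (Fin C) ℝ) (p q : Fin C) :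
    Matrix (Fin d) (Fin C) ℝ :=
  fun i c => if c = p then U i q else if c = q then U i p else 0

/-- Euclidean inner product on `ℝ^{d×C}`. -/
def minner {d C : ℕ} (A B : Matrix (Fin d) (Fin C) ℝ) : ℝ :=
  ∑ i, ∑ c, A i c * B i c

/-- Index type for the Stiefel constraints: `C` norm constraints plus the
`C(C-1)/2` orthogonality constraints for pairs `p < q`. -/
def ConstraintIdx (C : ℕ) := Fin C ⊕ {x : Fin C × Fin C // x.1 < x.2}

instance (C : ℕ) : Fintype (ConstraintIdx C) := by unfold ConstraintIdx; infer_instance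
instance (C : ℕ) : DecidableEq (ConstraintIdx C) := by unfold ConstraintIdx; infer_instance

/-- The constraint gradient indexed by a constraint index. -/
def constraintGrad {d C : ℕ} (U : Matrix (Fin d) (Fin C) ℝ) :
    ConstraintIdx C → Matrix (Fin d) (Fin C) ℝ
  | Sum.inl s => gradNorm U s
  | Sum.inr x => gradOrtho U x.1.1 x.1.2

/-- Auxiliary: a matrix with a single nonzero column. -/
def colM {d C : ℕ} (v : Fin d → ℝ) (a : Fin C) : Matrix (Fin d) (Fin C) ℝ :=
  fun i c => if c = a then v i else 0

lemma gradNorm_eq_colM {d C : ℕ} (U : Matrix (Fin d) (Fin C) ℝ) (s : Fin C) :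
    gradNorm U s = colM (fun i => U i s) s := rfl

lemma gradOrtho_eq_colM {d C : ℕ} (U : Matrix (Fin d) (Fin C) ℝ) (p q : Fin C)
    (h : p ≠ q) :
    gradOrtho U p q = colM (fun i => U i q) p + colM (fun i => U i p) q := by
  funext i c
  simp only [gradOrtho, colM, Matrix.add_apply, Pi.add_apply]
  by_cases hp : c = p <;> by_cases hq : c = q <;> simp_all

lemma minner_add_left {d C : ℕ} (A B E : Matrix (Fin d) (Fin C) ℝ) :
    minner (A + B) E = minner A E + minner B E := by
  simp [minner, add_mul, Finset.sum_add_distrib]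

lemma minner_add_right {d C : ℕ} (A B E : Matrix (Fin d) (Fin C) ℝ) :
    minner A (B + E) = minner A B + minner A E := by
  simp [minner, mul_add, Finset.sum_add_distrib]

lemma minner_colM {d C : ℕ} (v w : Fin d → ℝ) (a b : Fin C) :
    minner (colM v a) (colM w b) = if a = b then ∑ i, v i * w i else 0 := by
  classical
  simp only [minner, colM, ite_mul, zero_mul, mul_ite, mul_zero]
  rw [Finset.sum_comm]
  by_cases hab : a = b
  · subst hab; simp [Finset.sum_ite_eq']
  · rw [if_neg hab]
    refine Finset.sum_eq_zero fun y _ => ?_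
    by_cases h1 : y = b <;> by_cases h2 : y = a <;> simp_all

/-- The determinant of the Gram matrix of the Stiefel constraint gradients at any
point `U` with `UᵀU = I_C` equals `2^{C(C−1)/2}`. -/
theorem stmt9 (d C : ℕ) (U : Matrix (Fin d) (Fin C) ℝ) (hU : Uᵀ * U = 1) :
    Matrix.det
      (Matrix.of (fun i j : ConstraintIdx C =>
        minner (constraintGrad U i) (constraintGrad U j))) =
      2 ^ (C * (C - 1) / 2) := by
  have hcol : ∀ a b : Fin C, ∑ i, U i a * U i b = if a = b then 1 else 0 := by
    intro a b
    have := congrFun (congrFun hU a) b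
    simpa [Matrix.mul_apply, Matrix.one_apply, mul_comm] using this
  have hdiag :
      (Matrix.of (fun i j : ConstraintIdx C =>
        minner (constraintGrad U i) (constraintGrad U j))) =
      Matrix.diagonal (fun i : ConstraintIdx C => Sum.elim (fun _ => (1:ℝ)) (fun _ => (2:ℝ)) i) := by
    ext i j
    simp only [Matrix.of_apply, Matrix.diagonal_apply]
    rcases i with s | ⟨⟨p, q⟩, hpq⟩ <;> rcases j with t | ⟨⟨p', q'⟩, hpq'⟩
    · simp only [Matrix.of_apply, constraintGrad, gradNorm_eq_colM, minner_colM, hcol,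
        Matrix.diagonal_apply, Sum.elim_inl]
      by_cases h : s = t <;> simp [h]
      · rfl
      · exact fun e => h (Sum.inl.inj e)
    · simp only [Matrix.of_apply, constraintGrad, gradNorm_eq_colM,
        gradOrtho_eq_colM U p' q' hpq'.ne, minner_add_right, minner_colM, hcol]
      refine Eq.trans ?_ (if_neg (show (Sum.inl s : ConstraintIdx C) ≠ Sum.inr ⟨(p', q'), hpq'⟩ from
        Sum.inl_ne_inr)).symm
      have h1 : p' ≠ q' := hpq'.ne
      split_ifs <;> first | rfl | simp_all
    · simp only [Matrix.of_apply, constraintGrad, gradNorm_eq_colM,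
        gradOrtho_eq_colM U p q hpq.ne, minner_add_left, minner_colM, hcol]
      refine Eq.trans ?_ (if_neg (show (Sum.inr ⟨(p, q), hpq⟩ : ConstraintIdx C) ≠ Sum.inl t from
        Sum.inr_ne_inl)).symm
      have h1 : p ≠ q := hpq.ne
      split_ifs <;> first | rfl | simp_all
    · simp only [Matrix.of_apply, constraintGrad, gradOrtho_eq_colM U p q hpq.ne,
        gradOrtho_eq_colM U p' q' hpq'.ne, minner_add_left, minner_add_right,
        minner_colM, hcol, Matrix.diagonal_apply, Sum.elim_inr]
      have heq : (Sum.inr ⟨(p, q), hpq⟩ : ConstraintIdx C) = Sum.inr ⟨(p', q'), hpq'⟩ ↔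
          p = p' ∧ q = q' := by
        constructor
        · intro h
          have h2 : (⟨(p, q), hpq⟩ : {x : Fin C × Fin C // x.1 < x.2}) = ⟨(p', q'), hpq'⟩ :=
            Sum.inr.inj h
          have h3 : (p, q) = (p', q') := congrArg Subtype.val h2
          exact ⟨congrArg Prod.fst h3, congrArg Prod.snd h3⟩
        · rintro ⟨rfl, rfl⟩; rfl
      refine Eq.trans ?_ (if_congr heq rfl rfl).symm
      have h1 : p < q := hpq
      have h2 : p' < q' := hpq'
      have e1 : ¬ (q = p' ∧ p = q') := fun ⟨a, b⟩ => absurd (b ▸ a ▸ h1) (not_lt.2 h2.le)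
      have e2 : ¬ (p = q' ∧ q = p') := fun ⟨a, b⟩ => e1 ⟨b, a⟩
      by_cases c1 : p = p' <;> by_cases c2 : q = q' <;>
        simp_all [h1.ne, h1.ne', h2.ne, h2.ne'] <;> norm_num
  rw [hdiag, Matrix.det_diagonal]
  have hprod : ∏ i : ConstraintIdx C, (Sum.elim (fun _ => (1:ℝ)) (fun _ => (2:ℝ))) i =
      ∏ i : Fin C ⊕ {x : Fin C × Fin C // x.1 < x.2},
        (Sum.elim (fun _ => (1:ℝ)) (fun _ => (2:ℝ))) i := rfl
  rw [hprod, Fintype.prod_sum_type]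
  simp only [Sum.elim_inl, Sum.elim_inr, Finset.prod_const_one, one_mul, Finset.prod_const]
  congr 1
  rw [Finset.card_univ]
  have e : {x : Fin C × Fin C // x.1 < x.2} ≃ Σ b : Fin C, Fin b.val :=
    { toFun := fun x => ⟨x.1.2, ⟨x.1.1, x.2⟩⟩
      invFun := fun y => ⟨(⟨y.2.1, y.2.2.trans y.1.2⟩, y.1), y.2.2⟩
      left_inv := fun x => by cases x; simp
      right_inv := fun y => by cases y; simp }
  rw [Fintype.card_congr e, Fintype.card_sigma]
  simp only [Fintype.card_fin]
  rw [Fin.sum_univ_eq_sum_range (fun i => i), Finset.sum_range_id]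
end

section
/- The Lagrange multiplier functions on the Stiefel manifold satisfy σ_s(U) = ⟨∂f/∂u_s, u_s⟩ and σ_{pq}(U) = (1/2)(⟨∂f/∂u_q, u_p⟩ + ⟨∂f/∂u_p, u_q⟩), where these are defined via ratios of Gram determinants as in the embedded gradient vector field method. -/
open Matrix

attribute [local instance] Matrix.normedAddCommGroup Matrix.normedSpace

open Finset

/-- The Gram matrix of the constraint gradients. -/
def gram {d C : ℕ} (U : Matrix (Fin d) (Fin C) ℝ) :
    Matrix (ConstraintIdx C) (ConstraintIdx C) ℝ :=
  Matrix.of (fun i j => minner (constraintGrad U i) (constraintGrad U j))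

/-- `gram` with the column indexed by `k` replaced by the inner products of the
Euclidean gradient `Gf` of `f` against all constraint gradients. -/
def gramRepl {d C : ℕ} (U Gf : Matrix (Fin d) (Fin C) ℝ) (k : ConstraintIdx C) :
    Matrix (ConstraintIdx C) (ConstraintIdx C) ℝ :=
  (gram U).updateCol k (fun i => minner Gf (constraintGrad U i))

lemma minner_gradNorm {d C : ℕ} (U B : Matrix (Fin d) (Fin C) ℝ) (s : Fin C) :
    minner B (gradNorm U s) = ∑ i, B i s * U i s := by
  unfold minner gradNorm
  simp [mul_ite, mul_zero, Finset.sum_ite_eq']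

lemma minner_gradOrtho {d C : ℕ} (U B : Matrix (Fin d) (Fin C) ℝ) {p q : Fin C} (h : p ≠ q) :
    minner B (gradOrtho U p q) = (∑ i, B i p * U i q) + ∑ i, B i q * U i p := by
  unfold minner gradOrtho
  rw [← Finset.sum_add_distrib]
  refine Finset.sum_congr rfl fun i _ => ?_
  have key : ∀ c : Fin C, B i c * (if c = p then U i q else if c = q then U i p else 0)
      = (if c = p then B i p * U i q else 0) + (if c = q then B i q * U i p else 0) := by
    intro c
    by_cases hp : c = p
    · subst hp; simp [h]
    · by_cases hq : c = q <;> simp [hp, hq, Ne.symm h]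
  rw [Finset.sum_congr rfl (fun c _ => key c), Finset.sum_add_distrib]
  simp [Finset.sum_ite_eq']

def cw (C : ℕ) : ConstraintIdx C → ℝ := Sum.elim (fun _ => 1) (fun _ => 2)

lemma gram_eq_diagonal {d C : ℕ} (U : Matrix (Fin d) (Fin C) ℝ) (hU : Uᵀ * U = 1) :
    gram U = Matrix.diagonal (cw C) := by
  have hort : ∀ p q : Fin C, (∑ i, U i p * U i q) = if p = q then (1:ℝ) else 0 := by
    intro p q
    have := congrFun (congrFun hU p) q
    simpa [Matrix.mul_apply, Matrix.one_apply, Matrix.transpose_apply] using this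
  ext i j
  rcases i with s | ⟨⟨p, q⟩, hpq⟩
  · rcases j with t | ⟨⟨p', q'⟩, hpq'⟩
    · -- inl inl
      rcases eq_or_ne s t with rfl | hst
      · refine Eq.trans ?_ (Matrix.diagonal_apply_eq (cw C) _).symm
        show minner (gradNorm U s) (gradNorm U s) = (1:ℝ)
        rw [minner_gradNorm]
        simp [gradNorm, hort]
      · have hne : (Sum.inl s : ConstraintIdx C) ≠ Sum.inl t :=
          fun hh => hst (Sum.inl.inj hh)
        refine Eq.trans ?_ (Matrix.diagonal_apply_ne (cw C) hne).symm
        show minner (gradNorm U s) (gradNorm U t) = 0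
        rw [minner_gradNorm]
        simp [gradNorm, Ne.symm hst, hort, hst]
    · -- inl inr
      have h2 : p' ≠ q' := ne_of_lt hpq'
      have hne : (Sum.inl s : ConstraintIdx C) ≠ Sum.inr ⟨(p', q'), hpq'⟩ :=
        fun hh => by cases hh
      refine Eq.trans ?_ (Matrix.diagonal_apply_ne (cw C) hne).symm
      show minner (gradNorm U s) (gradOrtho U p' q') = 0
      rw [minner_gradOrtho U _ h2]
      have t1 : (∑ i, gradNorm U s i p' * U i q') = 0 := by
        rcases eq_or_ne p' s with he | hn
        · have hsq : s ≠ q' := fun hh => h2 (he.trans hh)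
          simp [gradNorm, he, hort, hsq]
        · simp [gradNorm, hn]
      have t2 : (∑ i, gradNorm U s i q' * U i p') = 0 := by
        rcases eq_or_ne q' s with he | hn
        · have hsp : s ≠ p' := fun hh => h2 (hh.symm.trans he.symm)
          simp [gradNorm, he, hort, hsp]
        · simp [gradNorm, hn]
      rw [t1, t2, add_zero]
  · rcases j with t | ⟨⟨p', q'⟩, hpq'⟩
    · -- inr inl
      have h1 : p ≠ q := ne_of_lt hpq
      have hne : (Sum.inr ⟨(p, q), hpq⟩ : ConstraintIdx C) ≠ Sum.inl t :=
        fun hh => by cases hh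
      refine Eq.trans ?_ (Matrix.diagonal_apply_ne (cw C) hne).symm
      show minner (gradOrtho U p q) (gradNorm U t) = 0
      rw [minner_gradNorm]
      rcases eq_or_ne t p with he | hn
      · simp [gradOrtho, he, hort, Ne.symm h1]
      · rcases eq_or_ne t q with he2 | hn2
        · simp [gradOrtho, hn, he2, hort, h1, Ne.symm h1]
        · simp [gradOrtho, hn, hn2]
    · -- inr inr
      have h1 : p ≠ q := ne_of_lt hpq
      have h2 : p' ≠ q' := ne_of_lt hpq'
      have hv1 : (p : ℕ) < (q : ℕ) := hpq
      have hv2 : (p' : ℕ) < (q' : ℕ) := hpq'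
      by_cases hd : p = p' ∧ q = q'
      · obtain ⟨rfl, rfl⟩ := hd
        refine Eq.trans ?_ (Matrix.diagonal_apply_eq (cw C) _).symm
        show minner (gradOrtho U p q) (gradOrtho U p q) = (2:ℝ)
        rw [minner_gradOrtho U _ h2]
        simp [gradOrtho, Ne.symm h1, hort]
        norm_num
      · have hne : (Sum.inr ⟨(p, q), hpq⟩ : ConstraintIdx C) ≠ Sum.inr ⟨(p', q'), hpq'⟩ := by
          intro hh
          obtain ⟨h5, h6⟩ := Prod.mk.inj (congrArg Subtype.val (Sum.inr.inj hh))
          exact hd ⟨h5, h6⟩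
        refine Eq.trans ?_ (Matrix.diagonal_apply_ne (cw C) hne).symm
        show minner (gradOrtho U p q) (gradOrtho U p' q') = 0
        rw [minner_gradOrtho U _ h2]
        have t1 : (∑ i, gradOrtho U p q i p' * U i q') = 0 := by
          rcases eq_or_ne p' p with he | hn1
          · have hq : q ≠ q' := fun hh => hd ⟨he.symm, hh⟩
            simp [gradOrtho, he, hort, hq]
          · rcases eq_or_ne p' q with he2 | hn2
            · have hval := congrArg Fin.val he2
              have : p ≠ q' := Fin.ne_of_val_ne (by omega)
              simp [gradOrtho, hn1, he2, hort, this, Ne.symm h1]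
            · simp [gradOrtho, hn1, hn2]
        have t2 : (∑ i, gradOrtho U p q i q' * U i p') = 0 := by
          rcases eq_or_ne q' p with he | hn1
          · have hval := congrArg Fin.val he
            have : q ≠ p' := Fin.ne_of_val_ne (by omega)
            simp [gradOrtho, he, hort, this]
          · rcases eq_or_ne q' q with he2 | hn2
            · have hp : p ≠ p' := fun hh => hd ⟨hh, he2.symm⟩
              simp [gradOrtho, hn1, he2, hort, hp, Ne.symm h1]
            · simp [gradOrtho, hn1, hn2]
        rw [t1, t2, add_zero]

lemma sigma_eq {d C : ℕ} (U Gf : Matrix (Fin d) (Fin C) ℝ) (hU : Uᵀ * U = 1)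
    (k : ConstraintIdx C) :
    (gramRepl U Gf k).det / (gram U).det =
      minner Gf (constraintGrad U k) / cw C k := by
  set v : ConstraintIdx C → ℝ := fun i => minner Gf (constraintGrad U i) with hv
  have hdiag := gram_eq_diagonal U hU
  have hwpos : ∀ i : ConstraintIdx C, 0 < cw C i := by
    rintro (s | x) <;> norm_num [cw]
  have hdetpos : 0 < (gram U).det := by
    rw [hdiag, Matrix.det_diagonal]
    exact Finset.prod_pos fun i _ => hwpos i
  have hdz : (gram U).det ≠ 0 := ne_of_gt hdetpos
  have hcr : (gramRepl U Gf k).det = Matrix.cramer (gram U) v k := by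
    rw [Matrix.cramer_apply]; rfl
  have hmv' : cw C k * Matrix.cramer (gram U) v k = (gram U).det * v k := by
    have hmv := congrFun (Matrix.mulVec_cramer (gram U) v) k
    rw [hdiag, Matrix.mulVec_diagonal, ← hdiag] at hmv
    simpa [smul_eq_mul] using hmv
  rw [hcr]
  have hkey : Matrix.cramer (gram U) v k = (gram U).det * v k / cw C k := by
    rw [eq_div_iff (ne_of_gt (hwpos k)), mul_comm]
    exact hmv'
  rw [hkey, div_right_comm, mul_div_cancel_left₀ _ hdz]

/-- The Lagrange multiplier functions of the embedded gradient vector field on the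
Stiefel manifold satisfy `σ_s(U) = ⟨∂f/∂u_s, u_s⟩` and
`σ_{pq}(U) = (1/2)(⟨∂f/∂u_q, u_p⟩ + ⟨∂f/∂u_p, u_q⟩)`, where `σ` is defined via
ratios of Gram determinants and `∇f` is the Euclidean gradient of the smooth `f`. -/
theorem stmt10 (d C : ℕ) (hC : 1 ≤ C) (hdC : C ≤ d)
    (U : Matrix (Fin d) (Fin C) ℝ) (hU : Uᵀ * U = 1)
    (f : Matrix (Fin d) (Fin C) ℝ → ℝ) (hf : ContDiff ℝ (⊤ : ℕ∞) f)
    (Gf : Matrix (Fin d) (Fin C) ℝ)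
    (hGf : ∀ V : Matrix (Fin d) (Fin C) ℝ, fderiv ℝ f U V = minner Gf V) :
    (∀ s : Fin C,
      (gramRepl U Gf (Sum.inl s)).det / (gram U).det = ∑ i, Gf i s * U i s) ∧
    (∀ p q : Fin C, (h : p < q) →
      (gramRepl U Gf (Sum.inr ⟨(p, q), h⟩)).det / (gram U).det =
        (1 / 2) * ((∑ i, Gf i q * U i p) + ∑ i, Gf i p * U i q)) := by
  constructor
  · intro s
    rw [sigma_eq U Gf hU (Sum.inl s)]
    show minner Gf (gradNorm U s) / (1:ℝ) = _
    rw [minner_gradNorm, div_one]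
  · intro p q h
    rw [sigma_eq U Gf hU (Sum.inr ⟨(p, q), h⟩)]
    show minner Gf (gradOrtho U p q) / (2:ℝ) = _
    rw [minner_gradOrtho U Gf (ne_of_lt h)]
    ring
end
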